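/- Soundness of petrification: if the petrified program P_β(prog) satisfies both the safety specification S_safe and the bound specification S_bound, then the program prog is correct, i.e., no execution of prog reaches a local configuration containing the failure marker ↯. -/
import Mathlib


/-! Core semantics of the concurrent language with fork/join. -/

namespace Conc

abbrev Var := String
abbrev Val := ℤ
/-- Integer-valued expressions (shallow embedding, evaluated in a combined state). -/
abbrev AExp := (Var → Val) → Val
/-- Boolean-valued expressions. -/
abbrev BExp := (Var → Val) → Prop

/-- Commands of the language, parameterized by the type `T` of thread template names. -/
inductive Cmd (T : Type) where
  | assign : Var → AExp → Cmd T
  | assume_ : BExp → Cmd T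
  | assert_ : BExp → Cmd T
  | ite : BExp → Cmd T → Cmd T → Cmd T
  | while_ : BExp → Cmd T → Cmd T
  | fork : AExp → T → Cmd T
  | join : AExp → Cmd T
  | seq : Cmd T → Cmd T → Cmd T

/-- A remainder program: a command, successful termination `Ω`, or failure `↯`. -/
inductive Rem (T : Type) where
  | run : Cmd T → Rem T
  | term : Rem T   -- Ω
  | fail : Rem T   -- ↯

/-- Sequential composition `C ; X` of a command with a remainder, with `C ; Ω = C`. -/
def Rem.after {T : Type} (C : Cmd T) : Rem T → Rem T
  | .run C' => .run (C.seq C')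
  | _ => .run C

/-- A local configuration `⟨X, θ, t, s⟩`. -/
structure LConf (T : Type) where
  rem : Rem T
  tmpl : T
  tid : Option Val
  st : Var → Val

/-- A program: bodies of thread templates, the main template, and the global variables. -/
structure Prog (T : Type) where
  body : T → Cmd T
  main : T
  isGlobal : Var → Bool

/-- Combined state `s ∪ g`. -/
def Prog.comb {T : Type} (P : Prog T) (g s : Var → Val) : Var → Val :=
  fun x => if P.isGlobal x then g x else s x

/-- Kinds of simple statements labelling a step. -/
inductive Lab (T : Type) where
  | atomic : Lab T
  | forkL : T → Lab T
  | joinL : Lab T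

/-- Global configurations: a multiset of local configurations and a global state. -/
abbrev GConf (T : Type) := Multiset (LConf T) × (Var → Val)

/-- The small-step semantic transition relation. -/
inductive Step {T : Type} (P : Prog T) : Lab T → GConf T → GConf T → Prop where
  | assume_ {e : BExp} {X θ t s g} (h : e (P.comb g s)) :
      Step P .atomic ({⟨Rem.after (.assume_ e) X, θ, t, s⟩}, g) ({⟨X, θ, t, s⟩}, g)
  | assignGlobal {x e X θ t s g} (hx : P.isGlobal x = true) :
      Step P .atomic ({⟨Rem.after (.assign x e) X, θ, t, s⟩}, g)
        ({⟨X, θ, t, s⟩}, Function.update g x (e (P.comb g s)))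
  | assignLocal {x e X θ t s g} (hx : P.isGlobal x = false) :
      Step P .atomic ({⟨Rem.after (.assign x e) X, θ, t, s⟩}, g)
        ({⟨X, θ, t, Function.update s x (e (P.comb g s))⟩}, g)
  | assert₁ {e : BExp} {X θ t s g} (h : e (P.comb g s)) :
      Step P .atomic ({⟨Rem.after (.assert_ e) X, θ, t, s⟩}, g) ({⟨X, θ, t, s⟩}, g)
  | assert₂ {e : BExp} {X θ t s g} (h : ¬ e (P.comb g s)) :
      Step P .atomic ({⟨Rem.after (.assert_ e) X, θ, t, s⟩}, g) ({⟨.fail, θ, t, s⟩}, g)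
  | ite₁ {e C₁ C₂ X θ t s g} (h : e (P.comb g s)) :
      Step P .atomic ({⟨Rem.after (.ite e C₁ C₂) X, θ, t, s⟩}, g)
        ({⟨Rem.after C₁ X, θ, t, s⟩}, g)
  | ite₂ {e C₁ C₂ X θ t s g} (h : ¬ e (P.comb g s)) :
      Step P .atomic ({⟨Rem.after (.ite e C₁ C₂) X, θ, t, s⟩}, g)
        ({⟨Rem.after C₂ X, θ, t, s⟩}, g)
  | while₁ {e C X θ t s g} (h : e (P.comb g s)) :
      Step P .atomic ({⟨Rem.after (.while_ e C) X, θ, t, s⟩}, g)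
        ({⟨Rem.after C (Rem.after (.while_ e C) X), θ, t, s⟩}, g)
  | while₂ {e C X θ t s g} (h : ¬ e (P.comb g s)) :
      Step P .atomic ({⟨Rem.after (.while_ e C) X, θ, t, s⟩}, g) ({⟨X, θ, t, s⟩}, g)
  | fork {e θ' X θ t s s' g} :
      Step P (.forkL θ') ({⟨Rem.after (.fork e θ') X, θ, t, s⟩}, g)
        ({⟨X, θ, t, s⟩, ⟨.run (P.body θ'), θ', some (e (P.comb g s)), s'⟩}, g)
  | join {e X θ t s θ' s' g} :
      Step P .joinL
        ({⟨Rem.after (.join e) X, θ, t, s⟩, ⟨.term, θ', some (e (P.comb g s)), s'⟩}, g)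
        ({⟨X, θ, t, s⟩}, g)
  | frame {l M₁ M₁' M₂ g g'} :
      Step P l (M₁, g) (M₁', g') → Step P l (M₁ + M₂, g) (M₁' + M₂, g')

/-- Initial global configurations. -/
def IsInit {T : Type} (P : Prog T) (c : GConf T) : Prop :=
  ∃ s, c.1 = {⟨.run (P.body P.main), P.main, none, s⟩}

/-- `cfg 0 → cfg 1 → … → cfg n` is an execution with statement kinds `lab`. -/
def IsExec {T : Type} (P : Prog T) (n : ℕ) (cfg : ℕ → GConf T) (lab : ℕ → Lab T) : Prop :=
  IsInit P (cfg 0) ∧ ∀ i < n, Step P (lab i) (cfg i) (cfg (i + 1))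

/-- The number of local configurations with thread template `θ` in `M`. -/
def tmplCount {T : Type} [DecidableEq T] (M : Multiset (LConf T)) (θ : T) : ℕ :=
  Multiset.card (M.filter (fun c => c.tmpl = θ))

/-- The thread width of the program `P` is at most `β`. -/
def WidthLe {T : Type} [DecidableEq T] (P : Prog T) (β : ℕ) : Prop :=
  ∀ n cfg lab, IsExec P n cfg lab → ∀ i ≤ n, ∀ θ, tmplCount (cfg i).1 θ ≤ β

/-- `P` is correct: no execution reaches the failure marker `↯`. -/
def Correct {T : Type} (P : Prog T) : Prop :=
  ¬ ∃ n cfg lab, IsExec P n cfg lab ∧ ∃ i ≤ n, ∃ c ∈ (cfg i).1, c.rem = Rem.fail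

end Conc

/-! Petrification: the petrified program `P_β(prog)` as a Petri program. -/

namespace Conc

/-- Places of the petrified program with thread limit `β`. -/
inductive PPlace (T : Type) (β : ℕ) where
  | loc : Rem T → T → Option (Fin β) → PPlace T β
  | inUse : T → Fin β → PPlace T β
  | notInUse : T → Fin β → PPlace T β
  | insuff : T → PPlace T β

/-- Instantiated variables of the petrified program. -/
inductive IVar (T : Type) (β : ℕ) where
  | glob : Var → IVar T β
  | inst : Var → T → Option (Fin β) → IVar T β
  | idv : T → Fin β → IVar T β
deriving DecidableEq

/-- States of the petrified (Petri) program. -/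
abbrev IState (T : Type) (β : ℕ) := IVar T β → Val

/-- De-instantiated view of an instantiated state for thread instance `(θ, k)`. -/
def iev {T : Type} {β : ℕ} (P : Prog T) (σ : IState T β) (θ : T) (k : Option (Fin β)) :
    Var → Val :=
  fun x => if P.isGlobal x then σ (.glob x) else σ (.inst x θ k)

/-- Semantics of the instantiated assignment `[x := e]_{θ,k}`. -/
def assignRel {T : Type} {β : ℕ} [DecidableEq T] (P : Prog T) (x : Var) (e : AExp)
    (θ : T) (k : Option (Fin β)) : IState T β → IState T β → Prop :=
  fun σ σ' =>
    σ' = if P.isGlobal x then Function.update σ (.glob x) (e (iev P σ θ k))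
         else Function.update σ (.inst x θ k) (e (iev P σ θ k))

/-- Semantics of the instantiated statement `[assume e]_{θ,k}`. -/
def assumeRel {T : Type} {β : ℕ} (P : Prog T) (e : BExp) (θ : T) (k : Option (Fin β)) :
    IState T β → IState T β → Prop :=
  fun σ σ' => σ' = σ ∧ e (iev P σ θ k)

/-- Semantics of the fork label `id_{θ'}^{k'} := [e]_{θ,k}`. -/
def forkRel {T : Type} {β : ℕ} [DecidableEq T] (P : Prog T) (e : AExp)
    (θ : T) (k : Option (Fin β)) (θ' : T) (k' : Fin β) : IState T β → IState T β → Prop :=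
  fun σ σ' => σ' = Function.update σ (.idv θ' k') (e (iev P σ θ k))

/-- Semantics of the join label `assume id_{θ'}^{k'} == [e]_{θ,k}`. -/
def joinRel {T : Type} {β : ℕ} (P : Prog T) (e : AExp)
    (θ : T) (k : Option (Fin β)) (θ' : T) (k' : Fin β) : IState T β → IState T β → Prop :=
  fun σ σ' => σ' = σ ∧ σ (.idv θ' k') = e (iev P σ θ k)

/-- The control-flow relation of petrification: `pre ⟶[R] post`, where transitions are
labelled with the semantic relation `R` of their instantiated simple statement. -/
inductive PTrans {T : Type} {β : ℕ} [DecidableEq T] (P : Prog T) :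
    Set (PPlace T β) → (IState T β → IState T β → Prop) → Set (PPlace T β) → Prop where
  | assume_ (e : BExp) (X : Rem T) (θ : T) (k : Option (Fin β)) :
      PTrans P {.loc (Rem.after (.assume_ e) X) θ k} (assumeRel P e θ k) {.loc X θ k}
  | assign (x : Var) (e : AExp) (X : Rem T) (θ : T) (k : Option (Fin β)) :
      PTrans P {.loc (Rem.after (.assign x e) X) θ k} (assignRel P x e θ k) {.loc X θ k}
  | assert₁ (e : BExp) (X : Rem T) (θ : T) (k : Option (Fin β)) :
      PTrans P {.loc (Rem.after (.assert_ e) X) θ k} (assumeRel P e θ k) {.loc X θ k}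
  | assert₂ (e : BExp) (X : Rem T) (θ : T) (k : Option (Fin β)) :
      PTrans P {.loc (Rem.after (.assert_ e) X) θ k}
        (assumeRel P (fun v => ¬ e v) θ k) {.loc Rem.fail θ k}
  | ite₁ (e : BExp) (C₁ C₂ : Cmd T) (X : Rem T) (θ : T) (k : Option (Fin β)) :
      PTrans P {.loc (Rem.after (.ite e C₁ C₂) X) θ k} (assumeRel P e θ k)
        {.loc (Rem.after C₁ X) θ k}
  | ite₂ (e : BExp) (C₁ C₂ : Cmd T) (X : Rem T) (θ : T) (k : Option (Fin β)) :
      PTrans P {.loc (Rem.after (.ite e C₁ C₂) X) θ k} (assumeRel P (fun v => ¬ e v) θ k)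
        {.loc (Rem.after C₂ X) θ k}
  | while₁ (e : BExp) (C : Cmd T) (X : Rem T) (θ : T) (k : Option (Fin β)) :
      PTrans P {.loc (Rem.after (.while_ e C) X) θ k} (assumeRel P e θ k)
        {.loc (Rem.after C (Rem.after (.while_ e C) X)) θ k}
  | while₂ (e : BExp) (C : Cmd T) (X : Rem T) (θ : T) (k : Option (Fin β)) :
      PTrans P {.loc (Rem.after (.while_ e C) X) θ k} (assumeRel P (fun v => ¬ e v) θ k)
        {.loc X θ k}
  | fork (e : AExp) (θ' : T) (X : Rem T) (θ : T) (k : Option (Fin β)) (k' : Fin β) :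
      PTrans P
        ({.loc (Rem.after (.fork e θ') X) θ k, .notInUse θ' k'} ∪
          (PPlace.inUse θ') '' {j | j < k'})
        (forkRel P e θ k θ' k')
        ({.loc X θ k, .loc (.run (P.body θ')) θ' (some k'), .inUse θ' k'} ∪
          (PPlace.inUse θ') '' {j | j < k'})
  | insufficiency (e : AExp) (θ' : T) (X : Rem T) (θ : T) (k : Option (Fin β)) :
      PTrans P
        ({.loc (Rem.after (.fork e θ') X) θ k} ∪ (PPlace.inUse θ') '' Set.univ)
        (fun σ σ' => σ' = σ)
        {.insuff θ'}
  | join (e : AExp) (X : Rem T) (θ : T) (k : Option (Fin β)) (θ' : T) (k' : Fin β) :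
      PTrans P {.loc (Rem.after (.join e) X) θ k, .loc Rem.term θ' (some k'), .inUse θ' k'}
        (joinRel P e θ k θ' k')
        {.loc X θ k, .notInUse θ' k'}

/-- Initial marking of the petrified program. -/
def initMark {T : Type} (P : Prog T) (β : ℕ) : Set (PPlace T β) :=
  {PPlace.loc (.run (P.body P.main)) P.main none} ∪ {p | ∃ θ k, p = PPlace.notInUse θ k}

/-- Reachability of a marking together with a semantically consistent state
(markings of the 1-safe petrified program are identified with sets of places). -/
inductive PReach {T : Type} [DecidableEq T] (P : Prog T) (β : ℕ) :
    Set (PPlace T β) → IState T β → Prop where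
  | init (σ : IState T β) : PReach P β (initMark P β) σ
  | step {m σ pre R post σ'} : PReach P β m σ → PTrans P pre R post → pre ⊆ m →
      R σ σ' → PReach P β ((m \ pre) ∪ post) σ'

/-- The petrified program satisfies the specification `S` (a set of bad places):
no semantically executable firing sequence reaches a marking intersecting `S`. -/
def Satisfies {T : Type} [DecidableEq T] (P : Prog T) (β : ℕ) (S : Set (PPlace T β)) : Prop :=
  ¬ ∃ m σ, PReach P β m σ ∧ (m ∩ S).Nonempty

/-- The safety specification `S_safe`. -/
def Ssafe (T : Type) (β : ℕ) : Set (PPlace T β) :=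
  {p | ∃ θ k, p = PPlace.loc Rem.fail θ k}

/-- The bound specification `S_bound`. -/
def Sbound (T : Type) (β : ℕ) : Set (PPlace T β) :=
  {p | ∃ θ, p = PPlace.insuff θ}

end Conc


/-! Auxiliary development for the soundness proof. -/

namespace Conc

section Sound
open Classical
set_option linter.unusedSectionVars false

variable {T : Type} [DecidableEq T] {β : ℕ}

/-- Decorated configurations: local configurations with an instance index. -/
abbrev DConf (T : Type) (β : ℕ) := Multiset (LConf T × Option (Fin β))

def dkey (d : LConf T × Option (Fin β)) : T × Option (Fin β) := (d.1.tmpl, d.2)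

def dplace (d : LConf T × Option (Fin β)) : PPlace T β := .loc d.1.rem d.1.tmpl d.2

def Used (D : DConf T β) (θ : T) (k : Fin β) : Prop := (θ, some k) ∈ D.map dkey

instance (D : DConf T β) (θ : T) (k : Fin β) : Decidable (Used D θ k) := by
  unfold Used; infer_instance

def mark (D : DConf T β) : Set (PPlace T β) :=
  {p | ∃ d ∈ D, p = dplace d} ∪ {p | ∃ θ k, Used D θ k ∧ p = PPlace.inUse θ k}
    ∪ {p | ∃ θ k, ¬ Used D θ k ∧ p = PPlace.notInUse θ k}

def Untouched (D : DConf T β) : Set (IVar T β) :=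
  {v | ∃ x θ k, ¬ Used D θ k ∧ v = IVar.inst x θ (some k)}
    ∪ {v | ∃ θ k, ¬ Used D θ k ∧ v = IVar.idv θ k}

def Inv (P : Prog T) (g : Var → Val) (D : DConf T β) (σ : IState T β) : Prop :=
  (D.map dkey).Nodup ∧ (∀ d ∈ D, d.1.rem ≠ Rem.term) ∧
  (∀ x, P.isGlobal x = true → σ (.glob x) = g x) ∧
  (∀ d ∈ D, (∀ x, P.isGlobal x = false → σ (.inst x d.1.tmpl d.2) = d.1.st x) ∧
    ∀ k', d.2 = some k' → d.1.tid = some (σ (.idv d.1.tmpl k')))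

lemma iev_eq {P : Prog T} {g D} {σ : IState T β} (h : Inv P g D σ)
    {d : LConf T × Option (Fin β)} (hd : d ∈ D) :
    iev P σ d.1.tmpl d.2 = P.comb g d.1.st := by
  funext x
  unfold iev Prog.comb
  by_cases hx : P.isGlobal x
  · simp [hx, h.2.2.1 x hx]
  · simp only [Bool.not_eq_true] at hx
    simp [hx, (h.2.2.2 d hd).1 x hx]

/-- Non-frame steps. -/
inductive Base (P : Prog T) :
    Lab T → (Var → Val) → (Var → Val) → Multiset (LConf T) → Multiset (LConf T) → Prop where
  | assume_ {e : BExp} {X θ t s g} (h : e (P.comb g s)) :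
      Base P .atomic g g {⟨Rem.after (.assume_ e) X, θ, t, s⟩} {⟨X, θ, t, s⟩}
  | assignGlobal {x e X θ t s g} (hx : P.isGlobal x = true) :
      Base P .atomic g (Function.update g x (e (P.comb g s)))
        {⟨Rem.after (.assign x e) X, θ, t, s⟩} {⟨X, θ, t, s⟩}
  | assignLocal {x e X θ t s g} (hx : P.isGlobal x = false) :
      Base P .atomic g g {⟨Rem.after (.assign x e) X, θ, t, s⟩}
        {⟨X, θ, t, Function.update s x (e (P.comb g s))⟩}
  | assert₁ {e : BExp} {X θ t s g} (h : e (P.comb g s)) :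
      Base P .atomic g g {⟨Rem.after (.assert_ e) X, θ, t, s⟩} {⟨X, θ, t, s⟩}
  | assert₂ {e : BExp} {X θ t s g} (h : ¬ e (P.comb g s)) :
      Base P .atomic g g {⟨Rem.after (.assert_ e) X, θ, t, s⟩} {⟨.fail, θ, t, s⟩}
  | ite₁ {e C₁ C₂ X θ t s g} (h : e (P.comb g s)) :
      Base P .atomic g g {⟨Rem.after (.ite e C₁ C₂) X, θ, t, s⟩} {⟨Rem.after C₁ X, θ, t, s⟩}
  | ite₂ {e C₁ C₂ X θ t s g} (h : ¬ e (P.comb g s)) :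
      Base P .atomic g g {⟨Rem.after (.ite e C₁ C₂) X, θ, t, s⟩} {⟨Rem.after C₂ X, θ, t, s⟩}
  | while₁ {e C X θ t s g} (h : e (P.comb g s)) :
      Base P .atomic g g {⟨Rem.after (.while_ e C) X, θ, t, s⟩}
        {⟨Rem.after C (Rem.after (.while_ e C) X), θ, t, s⟩}
  | while₂ {e C X θ t s g} (h : ¬ e (P.comb g s)) :
      Base P .atomic g g {⟨Rem.after (.while_ e C) X, θ, t, s⟩} {⟨X, θ, t, s⟩}
  | fork {e θ' X θ t s s' g} :
      Base P (.forkL θ') g g {⟨Rem.after (.fork e θ') X, θ, t, s⟩}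
        {⟨X, θ, t, s⟩, ⟨.run (P.body θ'), θ', some (e (P.comb g s)), s'⟩}
  | join {e X θ t s θ' s' g} :
      Base P .joinL g g
        {⟨Rem.after (.join e) X, θ, t, s⟩, ⟨.term, θ', some (e (P.comb g s)), s'⟩}
        {⟨X, θ, t, s⟩}

lemma step_flat {P : Prog T} {l : Lab T} {c c' : GConf T} (h : Step P l c c') :
    ∃ F M₁ M₁', c.1 = M₁ + F ∧ c'.1 = M₁' + F ∧ Base P l c.2 c'.2 M₁ M₁' := by
  induction h with
  | assume_ h => exact ⟨0, _, _, (add_zero _).symm, (add_zero _).symm, Base.assume_ h⟩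
  | assignGlobal hx => exact ⟨0, _, _, (add_zero _).symm, (add_zero _).symm, Base.assignGlobal hx⟩
  | assignLocal hx => exact ⟨0, _, _, (add_zero _).symm, (add_zero _).symm, Base.assignLocal hx⟩
  | assert₁ h => exact ⟨0, _, _, (add_zero _).symm, (add_zero _).symm, Base.assert₁ h⟩
  | assert₂ h => exact ⟨0, _, _, (add_zero _).symm, (add_zero _).symm, Base.assert₂ h⟩
  | ite₁ h => exact ⟨0, _, _, (add_zero _).symm, (add_zero _).symm, Base.ite₁ h⟩
  | ite₂ h => exact ⟨0, _, _, (add_zero _).symm, (add_zero _).symm, Base.ite₂ h⟩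
  | while₁ h => exact ⟨0, _, _, (add_zero _).symm, (add_zero _).symm, Base.while₁ h⟩
  | while₂ h => exact ⟨0, _, _, (add_zero _).symm, (add_zero _).symm, Base.while₂ h⟩
  | fork => exact ⟨0, _, _, (add_zero _).symm, (add_zero _).symm, Base.fork⟩
  | join => exact ⟨0, _, _, (add_zero _).symm, (add_zero _).symm, Base.join⟩
  | @frame l M₁ M₁' M₂ g g' _ ih =>
      obtain ⟨F, N, N', h1, h2, hb⟩ := ih
      exact ⟨F + M₂, N, N', by simp at h1 ⊢; rw [h1, add_assoc],
        by simp at h2 ⊢; rw [h2, add_assoc], hb⟩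

lemma map_split {α γ : Type*} (f : α → γ) :
    ∀ (M₁ : Multiset γ) (D : Multiset α) (F : Multiset γ), D.map f = M₁ + F →
      ∃ D₁ DF, D = D₁ + DF ∧ D₁.map f = M₁ ∧ DF.map f = F := by
  intro M₁
  induction M₁ using Multiset.induction with
  | empty => intro D F h; exact ⟨0, D, by simp, by simp, by simpa using h⟩
  | cons b M' ih =>
      intro D F h
      have hb : b ∈ D.map f := by rw [h]; simp
      obtain ⟨a, ha, hfa⟩ := Multiset.mem_map.mp hb
      obtain ⟨D', hD'⟩ := Multiset.exists_cons_of_mem ha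
      subst hD'
      have h' : D'.map f = M' + F := by
        have := h
        rw [Multiset.map_cons, hfa, Multiset.cons_add] at this
        exact (Multiset.cons_inj_right _).mp this
      obtain ⟨D₁, DF, h1, h2, h3⟩ := ih D' F h'
      exact ⟨a ::ₘ D₁, DF, by rw [h1, Multiset.cons_add], by simp [h2, hfa], h3⟩

lemma mem_mark {D : DConf T β} {p : PPlace T β} :
    p ∈ mark D ↔ (∃ d ∈ D, p = dplace d) ∨ (∃ θ k, Used D θ k ∧ p = PPlace.inUse θ k)
      ∨ (∃ θ k, ¬ Used D θ k ∧ p = PPlace.notInUse θ k) := by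
  simp [mark, Set.mem_union, or_assoc]

lemma dplace_ne_of_key_ne {d₂ d : LConf T × Option (Fin β)} (h : dkey d₂ ≠ dkey d) :
    dplace d₂ ≠ dplace d := by
  intro he
  apply h
  unfold dplace at he
  rw [PPlace.loc.injEq] at he
  simp [dkey, he.2.1, he.2.2]

lemma used_congr {D D' : DConf T β} (h : D.map dkey = D'.map dkey) :
    ∀ θ k, Used D θ k ↔ Used D' θ k := by
  intro θ k; unfold Used; rw [h]

lemma used_cons {d : LConf T × Option (Fin β)} {DF : DConf T β} {θ k} :
    Used (d ::ₘ DF) θ k ↔ dkey d = (θ, some k) ∨ Used DF θ k := by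
  simp [Used, eq_comm]

lemma mark_cons_simple {DF : DConf T β} {d d' : LConf T × Option (Fin β)}
    (hk : dkey d' = dkey d) (hnd : dkey d ∉ DF.map dkey) :
    (mark (d ::ₘ DF) \ {dplace d}) ∪ {dplace d'} = mark (d' ::ₘ DF) := by
  have hkeys : (d ::ₘ DF).map dkey = (d' ::ₘ DF).map dkey := by simp [hk]
  have hU := used_congr hkeys
  have hne : ∀ d₂ ∈ DF, dplace d₂ ≠ dplace d := by
    intro d₂ h2 he
    apply hnd
    have : dkey d₂ = dkey d := by
      by_contra hc
      exact dplace_ne_of_key_ne hc he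
    exact this ▸ Multiset.mem_map_of_mem _ h2
  ext p
  simp only [Set.mem_union, Set.mem_diff, Set.mem_singleton_iff, mem_mark,
    Multiset.mem_cons]
  constructor
  · rintro (⟨h, hp⟩ | rfl)
    · rcases h with ⟨d₂, (rfl | h2), rfl⟩ | ⟨θ, k, hu, rfl⟩ | ⟨θ, k, hu, rfl⟩
      · exact absurd rfl hp
      · exact Or.inl ⟨d₂, Or.inr h2, rfl⟩
      · exact Or.inr (Or.inl ⟨θ, k, (hU θ k).mp hu, rfl⟩)
      · exact Or.inr (Or.inr ⟨θ, k, fun hc => hu ((hU θ k).mpr hc), rfl⟩)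
    · exact Or.inl ⟨d', Or.inl rfl, rfl⟩
  · rintro (⟨d₂, (rfl | h2), rfl⟩ | ⟨θ, k, hu, rfl⟩ | ⟨θ, k, hu, rfl⟩)
    · exact Or.inr rfl
    · exact Or.inl ⟨Or.inl ⟨d₂, Or.inr h2, rfl⟩, hne d₂ h2⟩
    · refine Or.inl ⟨Or.inr (Or.inl ⟨θ, k, (hU θ k).mpr hu, rfl⟩), by simp [dplace]⟩
    · refine Or.inl ⟨Or.inr (Or.inr ⟨θ, k, fun hc => hu ((hU θ k).mp hc), rfl⟩), by simp [dplace]⟩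

lemma derail_safe {P : Prog T} (hsafe : Satisfies P β (Ssafe T β)) {m σ pre R post σ' θ k}
    (hr : PReach P β m σ) (ht : PTrans P pre R post) (hpre : pre ⊆ m) (hR : R σ σ')
    (hpost : PPlace.loc Rem.fail θ k ∈ post) : False :=
  hsafe ⟨_, _, hr.step ht hpre hR, ⟨_, Or.inr hpost, θ, k, rfl⟩⟩

lemma derail_bound {P : Prog T} (hbound : Satisfies P β (Sbound T β)) {m σ pre R post σ' θ}
    (hr : PReach P β m σ) (ht : PTrans P pre R post) (hpre : pre ⊆ m) (hR : R σ σ')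
    (hpost : PPlace.insuff θ ∈ post) : False :=
  hbound ⟨_, _, hr.step ht hpre hR, ⟨_, Or.inr hpost, θ, rfl⟩⟩

lemma mark_init {P : Prog T} {s : Var → Val} :
    mark ({(⟨.run (P.body P.main), P.main, none, s⟩, (none : Option (Fin β)))} : DConf T β)
      = initMark P β := by
  ext p
  simp only [mem_mark, initMark, Set.mem_union, Set.mem_singleton_iff, Set.mem_setOf_eq]
  constructor
  · rintro (⟨d, hd, rfl⟩ | ⟨θ, k, hu, rfl⟩ | ⟨θ, k, _, rfl⟩)
    · simp only [Multiset.mem_singleton] at hd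
      subst hd
      exact Or.inl rfl
    · simp [Used, dkey] at hu
    · exact Or.inr ⟨θ, k, rfl⟩
  · rintro (rfl | ⟨θ, k, rfl⟩)
    · exact Or.inl ⟨_, Multiset.mem_singleton_self _, rfl⟩
    · refine Or.inr (Or.inr ⟨θ, k, ?_, rfl⟩)
      simp [Used, dkey]

lemma mark_fork {DF : DConf T β} {d d₁' d₂' : LConf T × Option (Fin β)} {θ' : T} {k' : Fin β}
    (hk1 : dkey d₁' = dkey d) (hk2 : dkey d₂' = (θ', some k'))
    (hnd : dkey d ∉ DF.map dkey)
    (hfree : ¬ Used (d ::ₘ DF) θ' k') (hmin : ∀ j : Fin β, j < k' → Used (d ::ₘ DF) θ' j) :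
    (mark (d ::ₘ DF) \ ({dplace d, PPlace.notInUse θ' k'} ∪ (PPlace.inUse θ') '' {j | j < k'}))
      ∪ ({dplace d₁', dplace d₂', PPlace.inUse θ' k'} ∪ (PPlace.inUse θ') '' {j | j < k'})
      = mark (d₁' ::ₘ d₂' ::ₘ DF) := by
  have hne : ∀ d₂ ∈ DF, dplace d₂ ≠ dplace d := by
    intro d₂ h2 he
    apply hnd
    have : dkey d₂ = dkey d := by
      by_contra hc
      exact dplace_ne_of_key_ne hc he
    exact this ▸ Multiset.mem_map_of_mem _ h2
  have hU : ∀ θ₂ k₂, Used (d₁' ::ₘ d₂' ::ₘ DF) θ₂ k₂ ↔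
      ((θ₂, k₂) = (θ', k') ∨ Used (d ::ₘ DF) θ₂ k₂) := by
    intro θ₂ k₂
    rw [used_cons, used_cons, used_cons, hk1, hk2]
    constructor
    · rintro (h | h | h)
      · exact Or.inr (Or.inl h)
      · rw [Prod.mk.injEq, Option.some.injEq] at h
        exact Or.inl (by simp [h.1.symm, h.2.symm])
      · exact Or.inr (Or.inr h)
    · rintro (h | h | h)
      · rw [Prod.mk.injEq] at h
        exact Or.inr (Or.inl (by simp [h.1, h.2]))
      · exact Or.inl h
      · exact Or.inr (Or.inr h)
  ext p
  simp only [Set.mem_union, Set.mem_diff, Set.mem_singleton_iff, mem_mark,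
    Multiset.mem_cons, Set.mem_insert_iff, Set.mem_image, Set.mem_setOf_eq]
  constructor
  · rintro (⟨h, hp⟩ | (rfl | rfl | rfl) | ⟨j, hj, rfl⟩)
    · have hp1 : p ≠ dplace d := fun hh => hp (Or.inl (Or.inl hh))
      have hp2 : p ≠ PPlace.notInUse θ' k' := fun hh => hp (Or.inl (Or.inr hh))
      have hp3 : ∀ j : Fin β, j < k' → PPlace.inUse θ' j ≠ p := by
        intro j hj hh
        exact hp (Or.inr ⟨j, hj, hh⟩)
      rcases h with ⟨d₂, (rfl | h2), rfl⟩ | ⟨θ₂, k₂, hu, rfl⟩ | ⟨θ₂, k₂, hu, rfl⟩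
      · exact absurd rfl hp1
      · exact Or.inl ⟨d₂, Or.inr (Or.inr h2), rfl⟩
      · exact Or.inr (Or.inl ⟨θ₂, k₂, (hU θ₂ k₂).mpr (Or.inr hu), rfl⟩)
      · refine Or.inr (Or.inr ⟨θ₂, k₂, ?_, rfl⟩)
        intro hc
        rcases (hU θ₂ k₂).mp hc with h | h
        · rw [Prod.mk.injEq] at h
          exact hp2 (by rw [h.1, h.2])
        · exact hu h
    · exact Or.inl ⟨d₁', Or.inl rfl, rfl⟩
    · exact Or.inl ⟨d₂', Or.inr (Or.inl rfl), rfl⟩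
    · exact Or.inr (Or.inl ⟨θ', k', (hU θ' k').mpr (Or.inl rfl), rfl⟩)
    · exact Or.inr (Or.inl ⟨θ', j, (hU θ' j).mpr (Or.inr (hmin j hj)), rfl⟩)
  · rintro (⟨d₂, (rfl | rfl | h2), rfl⟩ | ⟨θ₂, k₂, hu, rfl⟩ | ⟨θ₂, k₂, hu, rfl⟩)
    · exact Or.inr (Or.inl (Or.inl rfl))
    · exact Or.inr (Or.inl (Or.inr (Or.inl rfl)))
    · refine Or.inl ⟨Or.inl ⟨d₂, Or.inr h2, rfl⟩, ?_⟩
      rintro ((h | h) | ⟨j, hj, h⟩)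
      · exact hne d₂ h2 h
      · simp [dplace] at h
      · simp [dplace] at h
    · rcases (hU θ₂ k₂).mp hu with h | h
      · rw [Prod.mk.injEq] at h
        exact Or.inr (Or.inl (Or.inr (Or.inr (by rw [h.1, h.2]))))
      · by_cases hc : θ₂ = θ' ∧ k₂ < k'
        · exact Or.inr (Or.inr ⟨k₂, hc.2, by rw [hc.1]⟩)
        · refine Or.inl ⟨Or.inr (Or.inl ⟨θ₂, k₂, h, rfl⟩), ?_⟩
          rintro ((hh | hh) | ⟨j, hj, hh⟩)
          · simp [dplace] at hh
          · simp at hh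
          · rw [PPlace.inUse.injEq] at hh
            exact hc ⟨hh.1.symm, hh.2 ▸ hj⟩
    · have hp1 : (θ₂, k₂) ≠ (θ', k') := fun hc => hu ((hU θ₂ k₂).mpr (Or.inl hc))
      have hp2 : ¬ Used (d ::ₘ DF) θ₂ k₂ := fun hc => hu ((hU θ₂ k₂).mpr (Or.inr hc))
      refine Or.inl ⟨Or.inr (Or.inr ⟨θ₂, k₂, hp2, rfl⟩), ?_⟩
      rintro ((hh | hh) | ⟨j, hj, hh⟩)
      · simp [dplace] at hh
      · rw [PPlace.notInUse.injEq] at hh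
        exact hp1 (by rw [hh.1, hh.2])
      · simp at hh
lemma dkey_eq_iff {d' d : LConf T × Option (Fin β)} :
    dkey d' = dkey d ↔ d'.1.tmpl = d.1.tmpl ∧ d'.2 = d.2 := by
  simp [dkey, Prod.mk.injEq]

lemma untouched_key_congr {D D' : DConf T β} (h : D.map dkey = D'.map dkey) :
    Untouched D = Untouched D' := by
  have := used_congr h
  unfold Untouched
  ext v
  simp only [Set.mem_union, Set.mem_setOf_eq]
  constructor
  · rintro (⟨x, θ, k, hu, rfl⟩ | ⟨θ, k, hu, rfl⟩)
    · exact Or.inl ⟨x, θ, k, fun hc => hu ((this θ k).mpr hc), rfl⟩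
    · exact Or.inr ⟨θ, k, fun hc => hu ((this θ k).mpr hc), rfl⟩
  · rintro (⟨x, θ, k, hu, rfl⟩ | ⟨θ, k, hu, rfl⟩)
    · exact Or.inl ⟨x, θ, k, fun hc => hu ((this θ k).mp hc), rfl⟩
    · exact Or.inr ⟨θ, k, fun hc => hu ((this θ k).mp hc), rfl⟩

lemma sim_simple {P : Prog T} {g g' : Var → Val} {DF : DConf T β}
    {d d' : LConf T × Option (Fin β)} {σ σ' : IState T β}
    {R : IState T β → IState T β → Prop}
    (hinv : Inv P g (d ::ₘ DF) σ)
    (hreach : PReach P β (mark (d ::ₘ DF)) σ)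
    (ht : PTrans P {dplace d} R {dplace d'})
    (hR : R σ σ')
    (hk : dkey d' = dkey d)
    (hterm : d'.1.rem ≠ Rem.term)
    (hglob : ∀ x, P.isGlobal x = true → σ' (IVar.glob x) = g' x)
    (hself : ∀ x, P.isGlobal x = false → σ' (IVar.inst x d'.1.tmpl d'.2) = d'.1.st x)
    (htid : ∀ k₂, d'.2 = some k₂ → d'.1.tid = some (σ' (IVar.idv d'.1.tmpl k₂)))
    (hpres : ∀ x θ₂ k₂, (θ₂, k₂) ≠ (d.1.tmpl, d.2) →
      σ' (IVar.inst x θ₂ k₂) = σ (IVar.inst x θ₂ k₂))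
    (hidv : ∀ θ₂ k₂, σ' (IVar.idv θ₂ k₂) = σ (IVar.idv θ₂ k₂)) :
    Inv P g' (d' ::ₘ DF) σ' ∧ PReach P β (mark (d' ::ₘ DF)) σ'
      ∧ ∀ v ∈ Untouched (d' ::ₘ DF), σ' v = σ v := by
  obtain ⟨hnodup, hnoterm, hglob0, hloc0⟩ := hinv
  rw [Multiset.map_cons, Multiset.nodup_cons] at hnodup
  have hkeyne : ∀ d₂ ∈ DF, dkey d₂ ≠ dkey d := by
    intro d₂ h2 hc
    exact hnodup.1 (hc ▸ Multiset.mem_map_of_mem _ h2)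
  refine ⟨⟨?_, ?_, hglob, ?_⟩, ?_, ?_⟩
  · rw [Multiset.map_cons, Multiset.nodup_cons, hk]
    exact hnodup
  · rintro d₂ h2
    rcases Multiset.mem_cons.mp h2 with rfl | h2
    · exact hterm
    · exact hnoterm d₂ (Multiset.mem_cons_of_mem h2)
  · rintro d₂ h2
    rcases Multiset.mem_cons.mp h2 with rfl | h2
    · exact ⟨hself, htid⟩
    · have h0 := hloc0 d₂ (Multiset.mem_cons_of_mem h2)
      have hne : (d₂.1.tmpl, d₂.2) ≠ (d.1.tmpl, d.2) := by
        intro hc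
        exact hkeyne d₂ h2 (by simpa [dkey, Prod.mk.injEq] using Prod.mk.injEq .. ▸ hc)
      refine ⟨fun x hx => ?_, fun k₂ hk₂ => ?_⟩
      · rw [hpres x _ _ hne]; exact h0.1 x hx
      · rw [hidv]; exact h0.2 k₂ hk₂
  · have hpre : {dplace d} ⊆ mark (d ::ₘ DF) := by
      rw [Set.singleton_subset_iff, mem_mark]
      exact Or.inl ⟨d, Multiset.mem_cons_self _ _, rfl⟩
    have := PReach.step hreach ht hpre hR
    rwa [mark_cons_simple hk hnodup.1] at this
  · rintro v hv
    rw [untouched_key_congr (show (d' ::ₘ DF).map dkey = (d ::ₘ DF).map dkey by rw [Multiset.map_cons, Multiset.map_cons, hk])] at hv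
    rcases hv with ⟨x, θ₂, k₂, hu, rfl⟩ | ⟨θ₂, k₂, hu, rfl⟩
    · refine hpres x _ _ fun hc => hu ?_
      rw [Prod.mk.injEq] at hc
      unfold Used
      rw [Multiset.map_cons]
      exact Multiset.mem_cons.mpr (Or.inl (by simp [dkey, hc.1, hc.2]))
    · exact hidv _ _

lemma after_ne_term {C : Cmd T} {X : Rem T} : Rem.after C X ≠ Rem.term := by
  cases X <;> simp [Rem.after]

lemma after_fail_eq_term {C : Cmd T} : Rem.after C Rem.fail = Rem.after C Rem.term := by
  simp [Rem.after]

lemma sim {P : Prog T} (hsafe : Satisfies P β (Ssafe T β)) (hbound : Satisfies P β (Sbound T β))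
    {n : ℕ} {cfg : ℕ → GConf T} {lab : ℕ → Lab T} (hex : IsExec P n cfg lab) :
    ∀ i, i ≤ n → ∃ D : DConf T β, D.map Prod.fst = (cfg i).1 ∧
      ∀ τ : IState T β, ∃ σ : IState T β, Inv P (cfg i).2 D σ ∧ PReach P β (mark D) σ ∧
        ∀ v ∈ Untouched D, σ v = τ v := by
  intro i
  induction i with
  | zero =>
      intro _
      obtain ⟨s, hs⟩ := hex.1
      refine ⟨{(⟨.run (P.body P.main), P.main, none, s⟩, none)}, by simpa using hs.symm, ?_⟩
      intro τ
      refine ⟨fun v => match v with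
        | .glob x => (cfg 0).2 x
        | .inst x _ none => s x
        | .inst x θ (some k) => τ (.inst x θ (some k))
        | .idv θ k => τ (.idv θ k), ⟨by simp, ?_, fun x hx => rfl, ?_⟩, ?_, ?_⟩
      · intro d hd
        rw [Multiset.mem_singleton] at hd
        subst hd
        simp
      · intro d hd
        rw [Multiset.mem_singleton] at hd
        subst hd
        exact ⟨fun x hx => rfl, fun k h => by exact absurd h (by simp)⟩
      · rw [mark_init]
        exact PReach.init _
      · rintro v (⟨x, θ, k, hu, rfl⟩ | ⟨θ, k, hu, rfl⟩) <;> rfl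
  | succ i ih =>
      intro hle
      obtain ⟨D, hmap, hall⟩ := ih (Nat.le_of_succ_le hle)
      have hstep := hex.2 i (Nat.lt_of_succ_le hle)
      obtain ⟨F, M₁, M₁', hM, hM', hb⟩ := step_flat hstep
      generalize hgg : (cfg (i+1)).2 = g2 at hb ⊢
      generalize hg : (cfg i).2 = g1 at hb hall
      generalize hl : lab i = l at hb
      rw [hM']
      clear hM' hgg hg hl hstep
      cases hb with
      | @assume_ e X θ t s g h =>
          obtain ⟨D₁, DF, hD, h1, h2⟩ := map_split Prod.fst _ D F (hmap.trans hM)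
          obtain ⟨d, rfl, hd1⟩ := Multiset.map_eq_singleton.mp h1
          obtain ⟨c, k⟩ := d
          simp only at hd1
          subst hd1
          rw [Multiset.singleton_add] at hD
          subst hD
          have hiev : ∀ σ : IState T β,
              Inv P g2 ((⟨Rem.after (.assume_ e) X, θ, t, s⟩, k) ::ₘ DF) σ →
              iev P σ θ k = P.comb g2 s :=
            fun σ hinv => iev_eq hinv (Multiset.mem_cons_self _ _)
          by_cases hX : X = Rem.term
          · subst hX
            obtain ⟨σ, hinv, hreach, -⟩ := hall (fun _ => 0)
            refine (derail_safe hsafe hreach (PTrans.assume_ e Rem.fail θ k) ?_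
              (⟨rfl, ?_⟩ : assumeRel P e θ k σ σ) (Set.mem_singleton _)).elim
            · rw [Set.singleton_subset_iff, mem_mark]
              exact Or.inl ⟨_, Multiset.mem_cons_self _ _, by rw [after_fail_eq_term]; rfl⟩
            · rw [hiev σ hinv]; exact h
          · refine ⟨(⟨X, θ, t, s⟩, k) ::ₘ DF, by simp [h2, Multiset.singleton_add], ?_⟩
            intro τ
            obtain ⟨σ, hinv, hreach, hτ⟩ := hall τ
            have hs := sim_simple (d' := (⟨X, θ, t, s⟩, k)) hinv hreach
              (PTrans.assume_ e X θ k)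
              ⟨rfl, by rw [hiev σ hinv]; exact h⟩
              (by simp [dkey]) hX (hinv.2.2.1)
              (fun x hx => (hinv.2.2.2 _ (Multiset.mem_cons_self _ _)).1 x hx)
              (fun k₂ hk₂ => (hinv.2.2.2 _ (Multiset.mem_cons_self _ _)).2 k₂ hk₂)
              (fun _ _ _ _ => rfl) (fun _ _ => rfl)
            refine ⟨σ, hs.1, hs.2.1, fun v hv => (hs.2.2 v hv).trans (hτ v ?_)⟩
            rwa [untouched_key_congr (show ((⟨X, θ, t, s⟩, k) ::ₘ DF).map dkey
              = ((⟨Rem.after (.assume_ e) X, θ, t, s⟩, k) ::ₘ DF).map dkey by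
                rw [Multiset.map_cons, Multiset.map_cons]
                rfl)] at hv
      | @assignGlobal x e X θ t s g hx =>
          obtain ⟨D₁, DF, hD, h1, h2⟩ := map_split Prod.fst _ D F (hmap.trans hM)
          obtain ⟨d, rfl, hd1⟩ := Multiset.map_eq_singleton.mp h1
          obtain ⟨c, k⟩ := d
          simp only at hd1
          subst hd1
          rw [Multiset.singleton_add] at hD
          subst hD
          have hiev : ∀ σ : IState T β,
              Inv P g1 ((⟨Rem.after (.assign x e) X, θ, t, s⟩, k) ::ₘ DF) σ →
              iev P σ θ k = P.comb g1 s :=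
            fun σ hinv => iev_eq hinv (Multiset.mem_cons_self _ _)
          by_cases hX : X = Rem.term
          · subst hX
            obtain ⟨σ, hinv, hreach, -⟩ := hall (fun _ => 0)
            refine (derail_safe hsafe hreach (PTrans.assign x e Rem.fail θ k) ?_
              (show assignRel P x e θ k σ _ from rfl) (Set.mem_singleton _)).elim
            rw [Set.singleton_subset_iff, mem_mark]
            exact Or.inl ⟨_, Multiset.mem_cons_self _ _, by rw [after_fail_eq_term]; rfl⟩
          · refine ⟨(⟨X, θ, t, s⟩, k) ::ₘ DF, by simp [h2, Multiset.singleton_add], ?_⟩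
            intro τ
            obtain ⟨σ, hinv, hreach, hτ⟩ := hall τ
            have hupd : (if P.isGlobal x = true
                then Function.update σ (IVar.glob x) (e (iev P σ θ k))
                else Function.update σ (IVar.inst x θ k) (e (iev P σ θ k)))
                = Function.update σ (IVar.glob x) (e (iev P σ θ k)) := by rw [if_pos hx]
            have hs := sim_simple (d' := (⟨X, θ, t, s⟩, k))
              (g' := Function.update g1 x (e (P.comb g1 s))) hinv hreach
              (PTrans.assign x e X θ k)
              (show assignRel P x e θ k σ
                (Function.update σ (IVar.glob x) (e (iev P σ θ k))) from hupd.symm)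
              (by simp [dkey]) hX
              (by
                intro y hy
                by_cases hyx : y = x
                · subst hyx
                  rw [Function.update_self, Function.update_self, hiev σ hinv]
                · rw [Function.update_of_ne (by simp [hyx]), Function.update_of_ne hyx]
                  exact hinv.2.2.1 y hy)
              (by
                intro y hy
                rw [Function.update_of_ne (by simp)]
                exact (hinv.2.2.2 _ (Multiset.mem_cons_self _ _)).1 y hy)
              (by
                intro k₂ hk₂
                rw [Function.update_of_ne (by simp)]
                exact (hinv.2.2.2 _ (Multiset.mem_cons_self _ _)).2 k₂ hk₂)
              (fun y θ₂ k₂ _ => by rw [Function.update_of_ne (by simp)])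
              (fun θ₂ k₂ => by rw [Function.update_of_ne (by simp)])
            refine ⟨_, hs.1, hs.2.1, fun v hv => (hs.2.2 v hv).trans (hτ v ?_)⟩
            rwa [untouched_key_congr (show ((⟨X, θ, t, s⟩, k) ::ₘ DF).map dkey
              = ((⟨Rem.after (.assign x e) X, θ, t, s⟩, k) ::ₘ DF).map dkey by
                rw [Multiset.map_cons, Multiset.map_cons]
                rfl)] at hv
      | @assignLocal x e X θ t s g hx =>
          obtain ⟨D₁, DF, hD, h1, h2⟩ := map_split Prod.fst _ D F (hmap.trans hM)
          obtain ⟨d, rfl, hd1⟩ := Multiset.map_eq_singleton.mp h1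
          obtain ⟨c, k⟩ := d
          simp only at hd1
          subst hd1
          rw [Multiset.singleton_add] at hD
          subst hD
          have hiev : ∀ σ : IState T β,
              Inv P g2 ((⟨Rem.after (.assign x e) X, θ, t, s⟩, k) ::ₘ DF) σ →
              iev P σ θ k = P.comb g2 s :=
            fun σ hinv => iev_eq hinv (Multiset.mem_cons_self _ _)
          by_cases hX : X = Rem.term
          · subst hX
            obtain ⟨σ, hinv, hreach, -⟩ := hall (fun _ => 0)
            refine (derail_safe hsafe hreach (PTrans.assign x e Rem.fail θ k) ?_
              (show assignRel P x e θ k σ _ from rfl) (Set.mem_singleton _)).elim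
            rw [Set.singleton_subset_iff, mem_mark]
            exact Or.inl ⟨_, Multiset.mem_cons_self _ _, by rw [after_fail_eq_term]; rfl⟩
          · refine ⟨(⟨X, θ, t, Function.update s x (e (P.comb g2 s))⟩, k) ::ₘ DF,
              by simp [h2, Multiset.singleton_add], ?_⟩
            intro τ
            obtain ⟨σ, hinv, hreach, hτ⟩ := hall τ
            have hxg : ¬ (P.isGlobal x = true) := by rw [hx]; simp
            have hupd : (if P.isGlobal x = true
                then Function.update σ (IVar.glob x) (e (iev P σ θ k))
                else Function.update σ (IVar.inst x θ k) (e (iev P σ θ k)))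
                = Function.update σ (IVar.inst x θ k) (e (iev P σ θ k)) := by rw [if_neg hxg]
            have hs := sim_simple (d' := (⟨X, θ, t, Function.update s x (e (P.comb g2 s))⟩, k))
              (g' := g2) hinv hreach
              (PTrans.assign x e X θ k)
              (show assignRel P x e θ k σ
                (Function.update σ (IVar.inst x θ k) (e (iev P σ θ k))) from hupd.symm)
              (by simp [dkey]) hX
              (by
                intro y hy
                rw [Function.update_of_ne (by simp)]
                exact hinv.2.2.1 y hy)
              (by
                intro y hy
                show Function.update σ (IVar.inst x θ k) (e (iev P σ θ k)) (IVar.inst y θ k)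
                  = Function.update s x (e (P.comb g2 s)) y
                by_cases hyx : y = x
                · subst hyx
                  rw [Function.update_self, Function.update_self, hiev σ hinv]
                · rw [Function.update_of_ne (by simp [hyx]), Function.update_of_ne hyx]
                  exact (hinv.2.2.2 _ (Multiset.mem_cons_self _ _)).1 y hy)
              (by
                intro k₂ hk₂
                rw [Function.update_of_ne (by simp)]
                exact (hinv.2.2.2 _ (Multiset.mem_cons_self _ _)).2 k₂ hk₂)
              (by
                intro y θ₂ k₂ hne
                rw [Function.update_of_ne]
                intro hc
                rw [IVar.inst.injEq] at hc
                exact hne (by rw [hc.2.1, hc.2.2]))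
              (fun θ₂ k₂ => by rw [Function.update_of_ne (by simp)])
            refine ⟨_, hs.1, hs.2.1, fun v hv => (hs.2.2 v hv).trans (hτ v ?_)⟩
            rwa [untouched_key_congr (show ((⟨X, θ, t, Function.update s x (e (P.comb g2 s))⟩, k)
                ::ₘ DF).map dkey
              = ((⟨Rem.after (.assign x e) X, θ, t, s⟩, k) ::ₘ DF).map dkey by
                rw [Multiset.map_cons, Multiset.map_cons]
                rfl)] at hv
      | @assert₁ e X θ t s g h =>
          obtain ⟨D₁, DF, hD, h1, h2⟩ := map_split Prod.fst _ D F (hmap.trans hM)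
          obtain ⟨d, rfl, hd1⟩ := Multiset.map_eq_singleton.mp h1
          obtain ⟨c, k⟩ := d
          simp only at hd1
          subst hd1
          rw [Multiset.singleton_add] at hD
          subst hD
          have hiev : ∀ σ : IState T β,
              Inv P g2 ((⟨Rem.after (.assert_ e) X, θ, t, s⟩, k) ::ₘ DF) σ →
              iev P σ θ k = P.comb g2 s :=
            fun σ hinv => iev_eq hinv (Multiset.mem_cons_self _ _)
          by_cases hX : X = Rem.term
          · subst hX
            obtain ⟨σ, hinv, hreach, -⟩ := hall (fun _ => 0)
            refine (derail_safe hsafe hreach (PTrans.assert₁ e Rem.fail θ k) ?_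
              (⟨rfl, ?_⟩ : assumeRel P e θ k σ σ) (Set.mem_singleton _)).elim
            · rw [Set.singleton_subset_iff, mem_mark]
              exact Or.inl ⟨_, Multiset.mem_cons_self _ _, by rw [after_fail_eq_term]; rfl⟩
            · rw [hiev σ hinv]; exact h
          · refine ⟨(⟨X, θ, t, s⟩, k) ::ₘ DF, by simp [h2, Multiset.singleton_add], ?_⟩
            intro τ
            obtain ⟨σ, hinv, hreach, hτ⟩ := hall τ
            have hs := sim_simple (d' := (⟨X, θ, t, s⟩, k)) hinv hreach
              (PTrans.assert₁ e X θ k)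
              ⟨rfl, by rw [hiev σ hinv]; exact h⟩
              (by simp [dkey]) hX (hinv.2.2.1)
              (fun y hy => (hinv.2.2.2 _ (Multiset.mem_cons_self _ _)).1 y hy)
              (fun k₂ hk₂ => (hinv.2.2.2 _ (Multiset.mem_cons_self _ _)).2 k₂ hk₂)
              (fun _ _ _ _ => rfl) (fun _ _ => rfl)
            refine ⟨σ, hs.1, hs.2.1, fun v hv => (hs.2.2 v hv).trans (hτ v ?_)⟩
            rwa [untouched_key_congr (show ((⟨X, θ, t, s⟩, k) ::ₘ DF).map dkey
              = ((⟨Rem.after (.assert_ e) X, θ, t, s⟩, k) ::ₘ DF).map dkey by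
                rw [Multiset.map_cons, Multiset.map_cons]
                rfl)] at hv
      | @assert₂ e X θ t s g h =>
          obtain ⟨D₁, DF, hD, h1, h2⟩ := map_split Prod.fst _ D F (hmap.trans hM)
          obtain ⟨d, rfl, hd1⟩ := Multiset.map_eq_singleton.mp h1
          obtain ⟨c, k⟩ := d
          simp only at hd1
          subst hd1
          rw [Multiset.singleton_add] at hD
          subst hD
          have hiev : ∀ σ : IState T β,
              Inv P g2 ((⟨Rem.after (.assert_ e) X, θ, t, s⟩, k) ::ₘ DF) σ →
              iev P σ θ k = P.comb g2 s :=
            fun σ hinv => iev_eq hinv (Multiset.mem_cons_self _ _)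
          refine ⟨(⟨Rem.fail, θ, t, s⟩, k) ::ₘ DF, by simp [h2, Multiset.singleton_add], ?_⟩
          intro τ
          obtain ⟨σ, hinv, hreach, hτ⟩ := hall τ
          have hs := sim_simple (d' := (⟨Rem.fail, θ, t, s⟩, k)) hinv hreach
            (PTrans.assert₂ e X θ k)
            ⟨rfl, by rw [hiev σ hinv]; exact h⟩
            (by simp [dkey]) (by simp) (hinv.2.2.1)
            (fun y hy => (hinv.2.2.2 _ (Multiset.mem_cons_self _ _)).1 y hy)
            (fun k₂ hk₂ => (hinv.2.2.2 _ (Multiset.mem_cons_self _ _)).2 k₂ hk₂)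
            (fun _ _ _ _ => rfl) (fun _ _ => rfl)
          refine ⟨σ, hs.1, hs.2.1, fun v hv => (hs.2.2 v hv).trans (hτ v ?_)⟩
          rwa [untouched_key_congr (show ((⟨Rem.fail, θ, t, s⟩, k) ::ₘ DF).map dkey
            = ((⟨Rem.after (.assert_ e) X, θ, t, s⟩, k) ::ₘ DF).map dkey by
              rw [Multiset.map_cons, Multiset.map_cons]
              rfl)] at hv
      | @ite₁ e C₁ C₂ X θ t s g h =>
          obtain ⟨D₁, DF, hD, h1, h2⟩ := map_split Prod.fst _ D F (hmap.trans hM)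
          obtain ⟨d, rfl, hd1⟩ := Multiset.map_eq_singleton.mp h1
          obtain ⟨c, k⟩ := d
          simp only at hd1
          subst hd1
          rw [Multiset.singleton_add] at hD
          subst hD
          have hiev : ∀ σ : IState T β,
              Inv P g2 ((⟨Rem.after (.ite e C₁ C₂) X, θ, t, s⟩, k) ::ₘ DF) σ →
              iev P σ θ k = P.comb g2 s :=
            fun σ hinv => iev_eq hinv (Multiset.mem_cons_self _ _)
          refine ⟨(⟨Rem.after C₁ X, θ, t, s⟩, k) ::ₘ DF,
            by simp [h2, Multiset.singleton_add], ?_⟩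
          intro τ
          obtain ⟨σ, hinv, hreach, hτ⟩ := hall τ
          have hs := sim_simple (d' := (⟨Rem.after C₁ X, θ, t, s⟩, k)) hinv hreach
            (PTrans.ite₁ e C₁ C₂ X θ k)
            ⟨rfl, by rw [hiev σ hinv]; exact h⟩
            (by simp [dkey]) after_ne_term (hinv.2.2.1)
            (fun y hy => (hinv.2.2.2 _ (Multiset.mem_cons_self _ _)).1 y hy)
            (fun k₂ hk₂ => (hinv.2.2.2 _ (Multiset.mem_cons_self _ _)).2 k₂ hk₂)
            (fun _ _ _ _ => rfl) (fun _ _ => rfl)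
          refine ⟨σ, hs.1, hs.2.1, fun v hv => (hs.2.2 v hv).trans (hτ v ?_)⟩
          rwa [untouched_key_congr (show ((⟨Rem.after C₁ X, θ, t, s⟩, k) ::ₘ DF).map dkey
            = ((⟨Rem.after (.ite e C₁ C₂) X, θ, t, s⟩, k) ::ₘ DF).map dkey by
              rw [Multiset.map_cons, Multiset.map_cons]
              rfl)] at hv
      | @ite₂ e C₁ C₂ X θ t s g h =>
          obtain ⟨D₁, DF, hD, h1, h2⟩ := map_split Prod.fst _ D F (hmap.trans hM)
          obtain ⟨d, rfl, hd1⟩ := Multiset.map_eq_singleton.mp h1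
          obtain ⟨c, k⟩ := d
          simp only at hd1
          subst hd1
          rw [Multiset.singleton_add] at hD
          subst hD
          have hiev : ∀ σ : IState T β,
              Inv P g2 ((⟨Rem.after (.ite e C₁ C₂) X, θ, t, s⟩, k) ::ₘ DF) σ →
              iev P σ θ k = P.comb g2 s :=
            fun σ hinv => iev_eq hinv (Multiset.mem_cons_self _ _)
          refine ⟨(⟨Rem.after C₂ X, θ, t, s⟩, k) ::ₘ DF,
            by simp [h2, Multiset.singleton_add], ?_⟩
          intro τ
          obtain ⟨σ, hinv, hreach, hτ⟩ := hall τ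
          have hs := sim_simple (d' := (⟨Rem.after C₂ X, θ, t, s⟩, k)) hinv hreach
            (PTrans.ite₂ e C₁ C₂ X θ k)
            ⟨rfl, by rw [hiev σ hinv]; exact h⟩
            (by simp [dkey]) after_ne_term (hinv.2.2.1)
            (fun y hy => (hinv.2.2.2 _ (Multiset.mem_cons_self _ _)).1 y hy)
            (fun k₂ hk₂ => (hinv.2.2.2 _ (Multiset.mem_cons_self _ _)).2 k₂ hk₂)
            (fun _ _ _ _ => rfl) (fun _ _ => rfl)
          refine ⟨σ, hs.1, hs.2.1, fun v hv => (hs.2.2 v hv).trans (hτ v ?_)⟩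
          rwa [untouched_key_congr (show ((⟨Rem.after C₂ X, θ, t, s⟩, k) ::ₘ DF).map dkey
            = ((⟨Rem.after (.ite e C₁ C₂) X, θ, t, s⟩, k) ::ₘ DF).map dkey by
              rw [Multiset.map_cons, Multiset.map_cons]
              rfl)] at hv
      | @while₁ e C X θ t s g h =>
          obtain ⟨D₁, DF, hD, h1, h2⟩ := map_split Prod.fst _ D F (hmap.trans hM)
          obtain ⟨d, rfl, hd1⟩ := Multiset.map_eq_singleton.mp h1
          obtain ⟨c, k⟩ := d
          simp only at hd1
          subst hd1
          rw [Multiset.singleton_add] at hD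
          subst hD
          have hiev : ∀ σ : IState T β,
              Inv P g2 ((⟨Rem.after (.while_ e C) X, θ, t, s⟩, k) ::ₘ DF) σ →
              iev P σ θ k = P.comb g2 s :=
            fun σ hinv => iev_eq hinv (Multiset.mem_cons_self _ _)
          refine ⟨(⟨Rem.after C (Rem.after (.while_ e C) X), θ, t, s⟩, k) ::ₘ DF,
            by simp [h2, Multiset.singleton_add], ?_⟩
          intro τ
          obtain ⟨σ, hinv, hreach, hτ⟩ := hall τ
          have hs := sim_simple
            (d' := (⟨Rem.after C (Rem.after (.while_ e C) X), θ, t, s⟩, k)) hinv hreach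
            (PTrans.while₁ e C X θ k)
            ⟨rfl, by rw [hiev σ hinv]; exact h⟩
            (by simp [dkey]) after_ne_term (hinv.2.2.1)
            (fun y hy => (hinv.2.2.2 _ (Multiset.mem_cons_self _ _)).1 y hy)
            (fun k₂ hk₂ => (hinv.2.2.2 _ (Multiset.mem_cons_self _ _)).2 k₂ hk₂)
            (fun _ _ _ _ => rfl) (fun _ _ => rfl)
          refine ⟨σ, hs.1, hs.2.1, fun v hv => (hs.2.2 v hv).trans (hτ v ?_)⟩
          rwa [untouched_key_congr
            (show ((⟨Rem.after C (Rem.after (.while_ e C) X), θ, t, s⟩, k) ::ₘ DF).map dkey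
            = ((⟨Rem.after (.while_ e C) X, θ, t, s⟩, k) ::ₘ DF).map dkey by
              rw [Multiset.map_cons, Multiset.map_cons]
              rfl)] at hv
      | @while₂ e C X θ t s g h =>
          obtain ⟨D₁, DF, hD, h1, h2⟩ := map_split Prod.fst _ D F (hmap.trans hM)
          obtain ⟨d, rfl, hd1⟩ := Multiset.map_eq_singleton.mp h1
          obtain ⟨c, k⟩ := d
          simp only at hd1
          subst hd1
          rw [Multiset.singleton_add] at hD
          subst hD
          have hiev : ∀ σ : IState T β,
              Inv P g2 ((⟨Rem.after (.while_ e C) X, θ, t, s⟩, k) ::ₘ DF) σ →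
              iev P σ θ k = P.comb g2 s :=
            fun σ hinv => iev_eq hinv (Multiset.mem_cons_self _ _)
          by_cases hX : X = Rem.term
          · subst hX
            obtain ⟨σ, hinv, hreach, -⟩ := hall (fun _ => 0)
            refine (derail_safe hsafe hreach (PTrans.while₂ e C Rem.fail θ k) ?_
              (⟨rfl, ?_⟩ : assumeRel P (fun v => ¬ e v) θ k σ σ) (Set.mem_singleton _)).elim
            · rw [Set.singleton_subset_iff, mem_mark]
              exact Or.inl ⟨_, Multiset.mem_cons_self _ _, by rw [after_fail_eq_term]; rfl⟩
            · rw [hiev σ hinv]; exact h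
          · refine ⟨(⟨X, θ, t, s⟩, k) ::ₘ DF, by simp [h2, Multiset.singleton_add], ?_⟩
            intro τ
            obtain ⟨σ, hinv, hreach, hτ⟩ := hall τ
            have hs := sim_simple (d' := (⟨X, θ, t, s⟩, k)) hinv hreach
              (PTrans.while₂ e C X θ k)
              ⟨rfl, by rw [hiev σ hinv]; exact h⟩
              (by simp [dkey]) hX (hinv.2.2.1)
              (fun y hy => (hinv.2.2.2 _ (Multiset.mem_cons_self _ _)).1 y hy)
              (fun k₂ hk₂ => (hinv.2.2.2 _ (Multiset.mem_cons_self _ _)).2 k₂ hk₂)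
              (fun _ _ _ _ => rfl) (fun _ _ => rfl)
            refine ⟨σ, hs.1, hs.2.1, fun v hv => (hs.2.2 v hv).trans (hτ v ?_)⟩
            rwa [untouched_key_congr (show ((⟨X, θ, t, s⟩, k) ::ₘ DF).map dkey
              = ((⟨Rem.after (.while_ e C) X, θ, t, s⟩, k) ::ₘ DF).map dkey by
                rw [Multiset.map_cons, Multiset.map_cons]
                rfl)] at hv
      | @join e X θ t s θ' s' g =>
          obtain ⟨D₁, DF, hD, h1, h2⟩ := map_split Prod.fst _ D F (hmap.trans hM)
          obtain ⟨σ, hinv, -, -⟩ := hall (fun _ => 0)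
          have hb : (⟨Rem.term, θ', some (e (P.comb g2 s)), s'⟩ : LConf T) ∈ D₁.map Prod.fst := by
            rw [h1]
            simp
          obtain ⟨d₂, hd₂, hfst⟩ := Multiset.mem_map.mp hb
          have hd₂D : d₂ ∈ D := hD ▸ Multiset.mem_add.mpr (Or.inl hd₂)
          exact absurd (by rw [hfst] : d₂.1.rem = Rem.term) (hinv.2.1 d₂ hd₂D)
      | @fork e θ' X θ t s s' g =>
          obtain ⟨D₁, DF, hD, h1, h2⟩ := map_split Prod.fst _ D F (hmap.trans hM)
          obtain ⟨d, rfl, hd1⟩ := Multiset.map_eq_singleton.mp h1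
          obtain ⟨c, k⟩ := d
          simp only at hd1
          subst hd1
          rw [Multiset.singleton_add] at hD
          subst hD
          have hiev : ∀ σ : IState T β,
              Inv P g2 ((⟨Rem.after (.fork e θ') X, θ, t, s⟩, k) ::ₘ DF) σ →
              iev P σ θ k = P.comb g2 s :=
            fun σ hinv => iev_eq hinv (Multiset.mem_cons_self _ _)
          set Dc : DConf T β := (⟨Rem.after (.fork e θ') X, θ, t, s⟩, k) ::ₘ DF with hDc
          by_cases hfull : ∀ k₂ : Fin β, Used Dc θ' k₂
          · obtain ⟨σ, hinv, hreach, -⟩ := hall (fun _ => 0)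
            refine (derail_bound hbound hreach (PTrans.insufficiency e θ' X θ k) ?_
              rfl (Set.mem_singleton _)).elim
            rintro p (rfl | ⟨j, -, rfl⟩)
            · rw [mem_mark]
              exact Or.inl ⟨_, Multiset.mem_cons_self _ _, rfl⟩
            · rw [mem_mark]
              exact Or.inr (Or.inl ⟨θ', j, hfull j, rfl⟩)
          · push_neg at hfull
            have hne : (Finset.univ.filter (fun k₂ => ¬ Used Dc θ' k₂)).Nonempty := by
              obtain ⟨k₂, hk₂⟩ := hfull
              exact ⟨k₂, Finset.mem_filter.mpr ⟨Finset.mem_univ _, hk₂⟩⟩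
            set k' : Fin β := (Finset.univ.filter (fun k₂ => ¬ Used Dc θ' k₂)).min' hne with hk'
            have hfree : ¬ Used Dc θ' k' :=
              (Finset.mem_filter.mp (Finset.min'_mem _ hne)).2
            have hmin : ∀ j : Fin β, j < k' → Used Dc θ' j := by
              intro j hj
              by_contra hc
              exact absurd (Finset.min'_le _ j
                (Finset.mem_filter.mpr ⟨Finset.mem_univ _, hc⟩)) (not_le.mpr hj)
            have hnd : dkey ((⟨Rem.after (.fork e θ') X, θ, t, s⟩ : LConf T), k) ∉ DF.map dkey := by
              have := hall (fun _ => 0)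
              obtain ⟨σ, hinv, -, -⟩ := this
              have h := hinv.1
              rw [hDc, Multiset.map_cons, Multiset.nodup_cons] at h
              exact h.1
            by_cases hX : X = Rem.term
            · subst hX
              obtain ⟨σ, hinv, hreach, -⟩ := hall (fun _ => 0)
              refine (derail_safe hsafe hreach (PTrans.fork e θ' Rem.fail θ k k') ?_
                (show forkRel P e θ k θ' k' σ _ from rfl)
                (Set.mem_union_left _ (Set.mem_insert _ _))).elim
              rintro p ((rfl | rfl) | ⟨j, hj, rfl⟩)
              · rw [mem_mark]
                exact Or.inl ⟨_, Multiset.mem_cons_self _ _, by rw [after_fail_eq_term]; rfl⟩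
              · rw [mem_mark]
                exact Or.inr (Or.inr ⟨θ', k', hfree, rfl⟩)
              · rw [mem_mark]
                exact Or.inr (Or.inl ⟨θ', j, hmin j hj, rfl⟩)
            · refine ⟨(⟨X, θ, t, s⟩, k) ::ₘ
                (⟨.run (P.body θ'), θ', some (e (P.comb g2 s)), s'⟩, some k') ::ₘ DF,
                by simp [h2, Multiset.insert_eq_cons, Multiset.cons_add, Multiset.singleton_add], ?_⟩
              intro τ
              obtain ⟨σ, hinv, hreach, hτ⟩ := hall (fun w => match w with
                | IVar.inst x θ₂ (some k₂) => if θ₂ = θ' ∧ k₂ = k' then s' x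
                    else τ (IVar.inst x θ₂ (some k₂))
                | w => τ w)
              have hUsub : ∀ θ₂ k₂, Used Dc θ₂ k₂ →
                  Used ((⟨X, θ, t, s⟩, k) ::ₘ
                    (⟨.run (P.body θ'), θ', some (e (P.comb g2 s)), s'⟩, some k') ::ₘ DF) θ₂ k₂ := by
                intro θ₂ k₂ h
                rw [used_cons] at h ⊢
                rcases h with h | h
                · exact Or.inl h
                · rw [used_cons]
                  exact Or.inr (Or.inr h)
              have hpre : ({PPlace.loc (Rem.after (.fork e θ') X) θ k, PPlace.notInUse θ' k'}
                  ∪ (PPlace.inUse θ') '' {j | j < k'}) ⊆ mark Dc := by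
                rintro p ((rfl | rfl) | ⟨j, hj, rfl⟩)
                · rw [mem_mark]
                  exact Or.inl ⟨_, Multiset.mem_cons_self _ _, rfl⟩
                · rw [mem_mark]
                  exact Or.inr (Or.inr ⟨θ', k', hfree, rfl⟩)
                · rw [mem_mark]
                  exact Or.inr (Or.inl ⟨θ', j, hmin j hj, rfl⟩)
              have hstep' := PReach.step hreach (PTrans.fork e θ' X θ k k') hpre
                (show forkRel P e θ k θ' k' σ
                  (Function.update σ (IVar.idv θ' k') (e (iev P σ θ k))) from rfl)
              have hmf := mark_fork (DF := DF)
                (d := (⟨Rem.after (.fork e θ') X, θ, t, s⟩, k))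
                (d₁' := (⟨X, θ, t, s⟩, k))
                (d₂' := (⟨.run (P.body θ'), θ', some (e (P.comb g2 s)), s'⟩, some k'))
                (θ' := θ') (k' := k') (by simp [dkey]) rfl hnd hfree hmin
              simp only [dplace] at hmf
              rw [hmf] at hstep'
              have hievσ := hiev σ hinv
              have hidvne : ∀ θ₂ (k₂ : Fin β), Used Dc θ₂ k₂ →
                  (IVar.idv θ₂ k₂ : IVar T β) ≠ IVar.idv θ' k' := by
                intro θ₂ k₂ hu hc
                rw [IVar.idv.injEq] at hc
                exact hfree (hc.1 ▸ hc.2 ▸ hu)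
              refine ⟨Function.update σ (IVar.idv θ' k') (e (iev P σ θ k)),
                ⟨?_, ?_, ?_, ?_⟩, hstep', ?_⟩
              · -- nodup
                have h := hinv.1
                rw [hDc, Multiset.map_cons, Multiset.nodup_cons] at h
                rw [Multiset.map_cons, Multiset.map_cons, Multiset.nodup_cons,
                  Multiset.nodup_cons]
                refine ⟨?_, ?_, h.2⟩
                · rw [Multiset.mem_cons]
                  rintro (hc | hc)
                  · have : dkey ((⟨X, θ, t, s⟩ : LConf T), k)
                        = ((θ', some k') : T × Option (Fin β)) := by rw [hc]; rfl
                    rw [dkey] at this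
                    apply hfree
                    rw [hDc, used_cons]
                    exact Or.inl (by simpa [dkey] using this)
                  · exact h.1 (by simpa [dkey] using hc)
                · intro hc
                  apply hfree
                  rw [hDc, used_cons]
                  exact Or.inr (by simpa [Used, dkey] using hc)
              · -- noterm
                intro d₂ hd₂
                rw [Multiset.mem_cons, Multiset.mem_cons] at hd₂
                rcases hd₂ with rfl | rfl | hd₂
                · exact hX
                · simp
                · exact hinv.2.1 d₂ (Multiset.mem_cons_of_mem hd₂)
              · -- glob
                intro y hy
                rw [Function.update_of_ne (by simp)]
                exact hinv.2.2.1 y hy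
              · -- locals
                intro d₂ hd₂
                rw [Multiset.mem_cons, Multiset.mem_cons] at hd₂
                rcases hd₂ with rfl | rfl | hd₂
                · refine ⟨?_, ?_⟩
                  · intro y hy
                    rw [Function.update_of_ne (by simp)]
                    exact (hinv.2.2.2 _ (Multiset.mem_cons_self _ _)).1 y hy
                  · intro k₂ hk₂
                    rw [Function.update_of_ne (hidvne θ k₂ (by
                      rw [hDc, used_cons]
                      exact Or.inl (by simp [dkey]; exact hk₂)))]
                    exact (hinv.2.2.2 _ (Multiset.mem_cons_self _ _)).2 k₂ hk₂
                · refine ⟨?_, ?_⟩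
                  · intro y hy
                    rw [Function.update_of_ne (by simp)]
                    have hun : (IVar.inst y θ' (some k') : IVar T β) ∈ Untouched Dc :=
                      Or.inl ⟨y, θ', k', hfree, rfl⟩
                    rw [hτ _ hun]
                    simp
                  · intro k₂ hk₂
                    simp only [Option.some.injEq] at hk₂
                    subst hk₂
                    rw [Function.update_self, hievσ]
                · refine ⟨?_, ?_⟩
                  · intro y hy
                    rw [Function.update_of_ne (by simp)]
                    exact (hinv.2.2.2 _ (Multiset.mem_cons_of_mem hd₂)).1 y hy
                  · intro k₂ hk₂
                    rw [Function.update_of_ne (hidvne d₂.1.tmpl k₂ (by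
                      rw [hDc, used_cons]
                      refine Or.inr ?_
                      rw [Used]
                      exact Multiset.mem_map.mpr ⟨d₂, hd₂, by rw [dkey, hk₂]⟩))]
                    exact (hinv.2.2.2 _ (Multiset.mem_cons_of_mem hd₂)).2 k₂ hk₂
              · -- untouched agreement
                rintro v (⟨y, θ₂, k₂, hu, rfl⟩ | ⟨θ₂, k₂, hu, rfl⟩)
                · have hne2 : ¬ (θ₂ = θ' ∧ k₂ = k') := by
                    rintro ⟨rfl, rfl⟩
                    apply hu
                    rw [used_cons]
                    exact Or.inr (by rw [used_cons]; exact Or.inl rfl)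
                  have huD : ¬ Used Dc θ₂ k₂ := fun hc => hu (hUsub θ₂ k₂ hc)
                  rw [Function.update_of_ne (by simp)]
                  rw [hτ _ (Or.inl ⟨y, θ₂, k₂, huD, rfl⟩)]
                  simp only []
                  rw [if_neg hne2]
                · have hne2 : (IVar.idv θ₂ k₂ : IVar T β) ≠ IVar.idv θ' k' := by
                    intro hc
                    rw [IVar.idv.injEq] at hc
                    apply hu
                    rw [hc.1, hc.2, used_cons]
                    exact Or.inr (by rw [used_cons]; exact Or.inl rfl)
                  have huD : ¬ Used Dc θ₂ k₂ := fun hc => hu (hUsub θ₂ k₂ hc)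
                  rw [Function.update_of_ne hne2]
                  exact hτ _ (Or.inr ⟨θ₂, k₂, huD, rfl⟩)

end Sound

end Conc

open Conc in
/-- Soundness: if the petrified program `P_β(prog)` satisfies both the
safety specification and the bound specification, then `prog` is correct. -/
theorem petrification_sound {T : Type} [DecidableEq T] (P : Prog T) (β : ℕ)
    (hsafe : Satisfies P β (Ssafe T β)) (hbound : Satisfies P β (Sbound T β)) :
    Correct P := by
  rintro ⟨n, cfg, lab, hex, i, hin, c, hc, hfail⟩
  obtain ⟨D, hmap, hall⟩ := sim hsafe hbound hex i hin
  obtain ⟨σ, hinv, hreach, -⟩ := hall (fun _ => 0)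
  rw [← hmap] at hc
  obtain ⟨d, hd, hdc⟩ := Multiset.mem_map.mp hc
  refine hsafe ⟨_, _, hreach, ⟨dplace d, ?_, ⟨d.1.tmpl, d.2, ?_⟩⟩⟩
  · rw [mem_mark]
    exact Or.inl ⟨d, hd, rfl⟩
  · rw [dplace, hdc, hfail]
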